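/- arXiv:1409.7535 — 2 statements merged into one kernel-verified Lean document; each statement's English description precedes it below -/
import Mathlib

section
/- Let m ≥ 1, k ≥ 3, and let D be a (k,m)-critical oriented graph on n vertices in which every vertex v satisfies d⁺(v) = d⁻(v) = (k-1)m. Then there exist vertices u_1, …, u_{m+1}, u_n of D such that u_1, …, u_{m+1} are all out-neighbors or all in-neighbors of u_n, and the subdigraph induced by V(D) \ {u_1, …, u_{m+1}} is weakly connected. -/
open Finset

variable {V : Type*}

section Defs
variable [Fintype V] [DecidableEq V]

/-- Number of out-neighbors of `v` inside the vertex set `S`. -/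
def outDegOn (A : V → V → Prop) [DecidableRel A] (S : Finset V) (v : V) : ℕ :=
  (S.filter (fun w => A v w)).card

/-- Number of in-neighbors of `v` inside the vertex set `S`. -/
def inDegOn (A : V → V → Prop) [DecidableRel A] (S : Finset V) (v : V) : ℕ :=
  (S.filter (fun w => A w v)).card

/-- The induced subdigraph on `S` is weakly `m`-degenerate: every nonempty induced
subdigraph has a vertex of out-degree `< m` or in-degree `< m`. -/
def WeaklyDegOn (A : V → V → Prop) [DecidableRel A] (m : ℕ) (S : Finset V) : Prop :=
  ∀ T ⊆ S, T.Nonempty → ∃ v ∈ T, outDegOn A T v < m ∨ inDegOn A T v < m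

/-- The induced subdigraph on `S` has no directed cycle. -/
def AcyclicOn (A : V → V → Prop) (S : Finset V) : Prop :=
  ¬ ∃ v ∈ S, Relation.TransGen (fun x y => x ∈ S ∧ y ∈ S ∧ A x y) v v

/-- The `m`-degenerate chromatic number of the subdigraph induced on `S`. -/
noncomputable def chiDegOn (A : V → V → Prop) [DecidableRel A] (m : ℕ) (S : Finset V) : ℕ :=
  sInf {k | ∃ c : V → Fin k, ∀ i, WeaklyDegOn A m (S.filter (fun v => c v = i))}

/-- The acyclic (dichromatic) number of the subdigraph induced on `S`. -/
noncomputable def chiAcyclicOn (A : V → V → Prop) (S : Finset V) : ℕ :=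
  sInf {k | ∃ c : V → Fin k, ∀ i, AcyclicOn A (S.filter (fun v => c v = i))}

/-- `Δ̄(D)`: the maximum over vertices of the arithmetic mean of out- and in-degree. -/
def barDelta (A : V → V → Prop) [DecidableRel A] : ℚ :=
  ((Finset.univ.sup (fun v => outDegOn A Finset.univ v + inDegOn A Finset.univ v) : ℕ) : ℚ) / 2

/-- `Δ̄` of the subdigraph induced on `S`. -/
def barDeltaOn (A : V → V → Prop) [DecidableRel A] (S : Finset V) : ℚ :=
  ((S.sup (fun v => outDegOn A S v + inDegOn A S v) : ℕ) : ℚ) / 2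

end Defs

/-- The subdigraph induced on `S` is weakly connected (underlying undirected graph
is connected). -/
def WeaklyConnectedOn (A : V → V → Prop) (S : Finset V) : Prop :=
  ∀ x ∈ S, ∀ y ∈ S,
    Relation.ReflTransGen (fun a b => a ∈ S ∧ b ∈ S ∧ (A a b ∨ A b a)) x y

/-- An oriented graph: no directed 2-cycles (and hence no loops). -/
def Oriented (A : V → V → Prop) : Prop := ∀ x y, A x y → ¬ A y x

/-- An induced directed 4-cycle a→b→c→d→a (no reversed edges on the cycle). -/
def CyclePattern (A : V → V → Prop) (a b c d : V) : Prop :=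
  A a b ∧ A b c ∧ A c d ∧ A d a ∧ ¬A b a ∧ ¬A c b ∧ ¬A d c ∧ ¬A a d

/-- F₁: induced directed 4-cycle with no chords. -/
def F1Pattern (A : V → V → Prop) (a b c d : V) : Prop :=
  CyclePattern A a b c d ∧ ¬A b d ∧ ¬A d b ∧ ¬A c a ∧ ¬A a c

/-- F₂: induced directed 4-cycle plus the chord b→d. -/
def F2Pattern (A : V → V → Prop) (a b c d : V) : Prop :=
  CyclePattern A a b c d ∧ A b d ∧ ¬A d b ∧ ¬A c a ∧ ¬A a c

/-- G₁: induced directed 4-cycle plus the chord c→a. -/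
def G1Pattern (A : V → V → Prop) (a b c d : V) : Prop :=
  CyclePattern A a b c d ∧ ¬A b d ∧ ¬A d b ∧ A c a ∧ ¬A a c

/-- G₂: induced directed 4-cycle plus both chords b→d and c→a. -/
def G2Pattern (A : V → V → Prop) (a b c d : V) : Prop :=
  CyclePattern A a b c d ∧ A b d ∧ ¬A d b ∧ A c a ∧ ¬A a c

/-- `D` contains none of F₁, F₂, G₁, G₂ as an induced subdigraph. -/
def AvoidsFG (A : V → V → Prop) : Prop :=
  ¬ ∃ a b c d : V, a ≠ b ∧ a ≠ c ∧ a ≠ d ∧ b ≠ c ∧ b ≠ d ∧ c ≠ d ∧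
    (F1Pattern A a b c d ∨ F2Pattern A a b c d ∨ G1Pattern A a b c d ∨ G2Pattern A a b c d)

section Count
variable [Fintype V] [DecidableEq V]

/-- `e(S,T)`: the number of edges pointing from `S` to `T`. -/
def eCount (A : V → V → Prop) [DecidableRel A] (S T : Finset V) : ℕ :=
  ∑ x ∈ S, (T.filter (fun y => A x y)).card

/-- The quantity `f(V₁,…,V_s)` from Catlin's argument. -/
def fval (A : V → V → Prop) [DecidableRel A] {s : ℕ} (Δ : Fin s → ℕ)
    (P : Fin s → Finset V) : ℚ :=
  ∑ i, (Δ i : ℚ) * (P i).card +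
    (1/2) * ∑ i, ∑ j ∈ Finset.univ.filter (fun j => i < j),
      ((eCount A (P i) (P j) : ℚ) + (eCount A (P j) (P i) : ℚ))

end Count

/-!
A vertex-critical digraph is weakly connected: a colouring of `D - x` on one part and of
`D - y` on the rest would colour `D` with fewer colours. Suppose that for every star `U` (a set
of `m + 1` out-neighbours, or of `m + 1` in-neighbours, of a vertex `w`) the digraph `D - U` is
disconnected, so that some union `F` of its components misses `w`; take such an `F` of minimum
size. Inside `F` there is another star `U₂` with `w ∉ U₂`: the opposite neighbourhood of `w` if
`w ∈ F` (it cannot meet `U` since `D` is oriented), and otherwise the neighbourhood of a vertex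
of `F` with more than `m` out- or in-neighbours in `F`, whose existence follows from counting
degrees since `(k - 1) m ≥ 2m`. The components of `D - U₂` missing `w` lie in `F \ U₂`,
contradicting minimality.
-/

open Relation

section Basic

variable {A : V → V → Prop}

theorem Oriented.irrefl (hor : Oriented A) (v : V) : ¬A v v := fun h => hor v v h h

theorem Oriented.flip (hor : Oriented A) : Oriented (flip A) := fun x y h h' => hor y x h h'

def WeakAdjOn (A : V → V → Prop) (S : Finset V) (a b : V) : Prop :=
  a ∈ S ∧ b ∈ S ∧ (A a b ∨ A b a)

theorem weaklyConnectedOn_iff {S : Finset V} :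
    WeaklyConnectedOn A S ↔ ∀ x ∈ S, ∀ y ∈ S, ReflTransGen (WeakAdjOn A S) x y :=
  Iff.rfl

theorem reflTransGen_weakAdjOn_symm {S : Finset V} {a b : V}
    (h : ReflTransGen (WeakAdjOn A S) a b) :
    ReflTransGen (WeakAdjOn A S) b a :=
  ReflTransGen.mono (fun _ _ h => ⟨h.2.1, h.1, h.2.2.symm⟩) _ _ (ReflTransGen.swap _ _ h)

/-- `F` is a union of weak components of the subdigraph obtained by deleting `U`. -/
def IsFragment (A : V → V → Prop) (U F : Finset V) : Prop :=
  F.Nonempty ∧ Disjoint F U ∧ ∀ a ∈ F, ∀ b ∉ U, (A a b ∨ A b a) → b ∈ F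

def IsStar (A : V → V → Prop) (m : ℕ) (w : V) (U : Finset V) : Prop :=
  U.card = m + 1 ∧ ((∀ u ∈ U, A w u) ∨ ∀ u ∈ U, A u w)

theorem IsFragment.flip {U F : Finset V} (hF : IsFragment A U F) : IsFragment (flip A) U F :=
  ⟨hF.1, hF.2.1, fun a ha b hb hab => hF.2.2 a ha b hb hab.symm⟩

theorem IsStar.adj {m : ℕ} {w : V} {U : Finset V} (hU : IsStar A m w U) {u : V} (hu : u ∈ U) :
    A w u ∨ A u w :=
  hU.2.imp (· u hu) (· u hu)

theorem IsStar.center_notMem (hor : Oriented A) {m : ℕ} {w : V} {U : Finset V}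
    (hU : IsStar A m w U) : w ∉ U :=
  fun hw => (hU.adj hw).elim (hor.irrefl w) (hor.irrefl w)

end Basic

section Coloring

variable {A : V → V → Prop} [DecidableRel A] {m : ℕ}

def ColorableOn (A : V → V → Prop) [DecidableRel A] (m : ℕ) (S : Finset V) (K : ℕ) : Prop :=
  ∃ c : V → Fin K, ∀ i, WeaklyDegOn A m (S.filter (fun v => c v = i))

theorem WeaklyDegOn.mono {S T : Finset V} (hST : S ⊆ T) (hT : WeaklyDegOn A m T) :
    WeaklyDegOn A m S :=
  fun R hR => hT R (hR.trans hST)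

theorem weaklyDegOn_of_subsingleton (hirr : ∀ v, ¬A v v) (hm : 1 ≤ m) {S : Finset V}
    (hS : (S : Set V).Subsingleton) : WeaklyDegOn A m S := by
  rintro T hT ⟨v, hv⟩
  refine ⟨v, hv, Or.inl ?_⟩
  have : T.filter (A v ·) = ∅ :=
    filter_eq_empty_iff.2 fun b hb hvb => hirr v (hS (hT hv) (hT hb) ▸ hvb)
  rw [outDegOn, this, card_empty]
  omega

theorem WeaklyDegOn.union [DecidableEq V] {S T : Finset V} (hS : WeaklyDegOn A m S)
    (hT : WeaklyDegOn A m T)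
    (hsep : ∀ x ∈ S, ∀ y ∈ T, ¬A x y ∧ ¬A y x) : WeaklyDegOn A m (S ∪ T) := by
  intro R hR hRne
  by_cases hRS : (R.filter (· ∈ S)).Nonempty
  · obtain ⟨v, hv, hlow⟩ := hS _ (fun x hx => (mem_filter.1 hx).2) hRS
    obtain ⟨hvR, hvS⟩ := mem_filter.1 hv
    have hnbr : ∀ b ∈ R, (A v b ∨ A b v) → b ∈ S := fun b hb hvb => by
      rcases mem_union.1 (hR hb) with h | h
      · exact h
      · exact absurd hvb (by have := hsep v hvS b h; tauto)
    refine ⟨v, hvR, hlow.imp (fun h => ?_) (fun h => ?_)⟩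
    · rwa [outDegOn, filter_filter, filter_congr fun b hb => and_iff_right_of_imp
        fun hvb => hnbr b hb (Or.inl hvb)] at h
    · rwa [inDegOn, filter_filter, filter_congr fun b hb => and_iff_right_of_imp
        fun hbv => hnbr b hb (Or.inr hbv)] at h
  · refine hT R (fun x hx => ?_) hRne
    rcases mem_union.1 (hR hx) with h | h
    · exact absurd ⟨x, mem_filter.2 ⟨hx, h⟩⟩ hRS
    · exact h

theorem ColorableOn.mono {S T : Finset V} {K L : ℕ} (hST : S ⊆ T) (hKL : K ≤ L)
    (hT : ColorableOn A m T K) : ColorableOn A m S L := by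
  obtain ⟨c, hc⟩ := hT
  refine ⟨Fin.castLE hKL ∘ c, fun i => ?_⟩
  rintro R hR ⟨v₀, hv₀⟩
  refine hc (c v₀) R (fun v hv => ?_) ⟨v₀, hv₀⟩
  have hv' := mem_filter.1 (hR hv)
  have hv₀' := mem_filter.1 (hR hv₀)
  exact mem_filter.2 ⟨hST hv'.1, Fin.castLE_injective hKL (hv'.2.trans hv₀'.2.symm)⟩

theorem ColorableOn.union [DecidableEq V] {S T : Finset V} {K : ℕ} (hS : ColorableOn A m S K)
    (hT : ColorableOn A m T K) (hsep : ∀ x ∈ S, ∀ y ∈ T, ¬A x y ∧ ¬A y x) :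
    ColorableOn A m (S ∪ T) K := by
  obtain ⟨c₁, hc₁⟩ := hS
  obtain ⟨c₂, hc₂⟩ := hT
  refine ⟨fun v => if v ∈ S then c₁ v else c₂ v, fun i => ?_⟩
  refine ((hc₁ i).union (hc₂ i) fun x hx y hy =>
    hsep x (mem_filter.1 hx).1 y (mem_filter.1 hy).1).mono fun v hv => ?_
  obtain ⟨hv, hci⟩ := mem_filter.1 hv
  simp only [mem_union, mem_filter]
  by_cases hvS : v ∈ S
  · exact Or.inl ⟨hvS, by simpa [hvS] using hci⟩
  · exact Or.inr ⟨(mem_union.1 hv).resolve_left hvS, by simpa [hvS] using hci⟩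

theorem chiDegOn_le {S : Finset V} {K : ℕ} (h : ColorableOn A m S K) : chiDegOn A m S ≤ K :=
  Nat.sInf_le h

theorem colorableOn_chiDegOn [Fintype V] (hirr : ∀ v, ¬A v v) (hm : 1 ≤ m) (S : Finset V) :
    ColorableOn A m S (chiDegOn A m S) :=
  Nat.sInf_mem (s := {K | ColorableOn A m S K}) ⟨Fintype.card V, Fintype.equivFin V,
    fun _ => weaklyDegOn_of_subsingleton hirr hm fun _ ha _ hb =>
      (Fintype.equivFin V).injective ((mem_filter.1 ha).2.trans (mem_filter.1 hb).2.symm)⟩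

theorem chiDegOn_eq_zero [IsEmpty V] (S : Finset V) : chiDegOn A m S = 0 :=
  Nat.le_zero.1 (chiDegOn_le ⟨isEmptyElim, fun i => i.elim0⟩)

end Coloring

section Fragment

variable [Fintype V] [DecidableEq V] {A : V → V → Prop}

theorem exists_isFragment_of_not_weaklyConnectedOn {U : Finset V} (h : V)
    (hnc : ¬WeaklyConnectedOn A (univ \ U)) :
    ∃ F, IsFragment A U F ∧ ∀ v ∈ F, ¬ReflTransGen (WeakAdjOn A (univ \ U)) v h := by
  classical
  rw [weaklyConnectedOn_iff] at hnc
  push Not at hnc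
  obtain ⟨x, hx, y, hy, hxy⟩ := hnc
  refine ⟨(univ \ U).filter (fun v => ¬ReflTransGen (WeakAdjOn A (univ \ U)) v h),
    ⟨?_, ?_, ?_⟩, fun v hv => (mem_filter.1 hv).2⟩
  · by_cases hxh : ReflTransGen (WeakAdjOn A (univ \ U)) x h
    · exact ⟨y, mem_filter.2 ⟨hy, fun hyh =>
        hxy (hxh.trans (reflTransGen_weakAdjOn_symm hyh))⟩⟩
    · exact ⟨x, mem_filter.2 ⟨hx, hxh⟩⟩
  · exact disjoint_left.2 fun _ hv => (mem_sdiff.1 (mem_filter.1 hv).1).2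
  · intro a ha b hb hab
    obtain ⟨haU, hah⟩ := mem_filter.1 ha
    have hbU : b ∈ univ \ U := mem_sdiff.2 ⟨mem_univ b, hb⟩
    exact mem_filter.2 ⟨hbU, fun hbh => hah (ReflTransGen.head ⟨haU, hbU, hab⟩ hbh)⟩

/-- A path from `z` to `w` either stays outside `F`, or first enters `F` from a vertex of `U`,
which is adjacent to `w`. -/
theorem reflTransGen_of_notMem_isFragment (hconn : WeaklyConnectedOn A univ)
    {U F U₂ : Finset V} {w : V} (hF : IsFragment A U F) (hwU : ∀ u ∈ U, A w u ∨ A u w)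
    (hU₂F : U₂ ⊆ F) (hw : w ∉ U₂) {z : V} (hzF : z ∉ F) (hzU₂ : z ∉ U₂) :
    ReflTransGen (WeakAdjOn A (univ \ U₂)) z w := by
  have hmem : ∀ {v}, v ∉ U₂ → v ∈ univ \ U₂ := fun hv =>
    mem_sdiff.2 ⟨mem_univ _, hv⟩
  revert hzF hzU₂
  induction hconn z (mem_univ z) w (mem_univ w) using ReflTransGen.head_induction_on with
  | refl => exact fun _ _ => .refl
  | @head a c hac _ ih =>
    intro haF haU₂
    by_cases hcF : c ∈ F
    · have haU : a ∈ U := by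
        by_contra haU
        exact haF (hF.2.2 c hcF a haU hac.2.2.symm)
      exact .single ⟨hmem haU₂, hmem hw, (hwU a haU).symm⟩
    · have hcU₂ : c ∉ U₂ := fun hc => hcF (hU₂F hc)
      exact .head ⟨hmem haU₂, hmem hcU₂, hac.2.2⟩ (ih hcF hcU₂)

theorem exists_isFragment_ssubset (hconn : WeaklyConnectedOn A univ) {U F U₂ : Finset V} {w : V}
    (hF : IsFragment A U F) (hwU : ∀ u ∈ U, A w u ∨ A u w) (hU₂F : U₂ ⊆ F)
    (hU₂ : U₂.Nonempty) (hw : w ∉ U₂) (hnc : ¬WeaklyConnectedOn A (univ \ U₂)) :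
    ∃ F₂, IsFragment A U₂ F₂ ∧ F₂ ⊂ F := by
  obtain ⟨F₂, hF₂, hunreach⟩ := exists_isFragment_of_not_weaklyConnectedOn w hnc
  have hsub : F₂ ⊆ F := fun v hv => by
    by_contra hvF
    exact hunreach v hv (reflTransGen_of_notMem_isFragment hconn hF hwU hU₂F hw hvF
      (disjoint_left.1 hF₂.2.1 hv))
  obtain ⟨u, hu⟩ := hU₂
  exact ⟨F₂, hF₂, (ssubset_iff_of_subset hsub).2
    ⟨u, hU₂F hu, fun huF₂ => disjoint_left.1 hF₂.2.1 huF₂ hu⟩⟩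

theorem weaklyConnectedOn_univ_of_critical [DecidableRel A] {m : ℕ} (hirr : ∀ v, ¬A v v)
    (hm : 1 ≤ m) (hcrit : ∀ v, chiDegOn A m (univ.erase v) < chiDegOn A m univ) :
    WeaklyConnectedOn A univ := by
  rcases isEmpty_or_nonempty V with hV | hV
  · exact fun x => isEmptyElim x
  obtain ⟨x⟩ := hV
  by_contra hnc
  obtain ⟨F, hF, hxF⟩ :=
    exists_isFragment_of_not_weaklyConnectedOn x (by rwa [sdiff_empty])
  obtain ⟨y, hy⟩ := hF.1
  have hsep : ∀ a ∈ F, ∀ b ∈ univ \ F, ¬A a b ∧ ¬A b a := fun a ha b hb => by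
    have := fun hab => (mem_sdiff.1 hb).2 (hF.2.2 a ha b (notMem_empty b) hab)
    tauto
  have hcol : ColorableOn A m (F ∪ univ \ F)
      (max (chiDegOn A m (univ.erase x)) (chiDegOn A m (univ.erase y))) :=
    ((colorableOn_chiDegOn hirr hm _).mono
      (fun v hv => mem_erase.2 ⟨fun h => hxF v hv (by rw [h]), mem_univ v⟩)
      (le_max_left _ _)).union
    ((colorableOn_chiDegOn hirr hm _).mono
      (fun v hv => mem_erase.2 ⟨fun h => (mem_sdiff.1 hv).2 (h ▸ hy), mem_univ v⟩)
      (le_max_right _ _)) hsep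
  rw [union_sdiff_of_subset (subset_univ F)] at hcol
  exact (chiDegOn_le hcol).not_gt (max_lt (hcrit x) (hcrit y))

end Fragment

instance {A : V → V → Prop} [DecidableRel A] : DecidableRel (flip A) :=
  fun a b => inferInstanceAs (Decidable (A b a))

section Degree

variable {A : V → V → Prop} [DecidableRel A]

theorem outDegOn_add_inDegOn_le_card (hor : Oriented A) (S : Finset V) (v : V) :
    outDegOn A S v + inDegOn A S v ≤ S.card := by
  classical
  rw [outDegOn, inDegOn,
    ← card_union_of_disjoint (disjoint_filter.2 fun b _ h h' => hor v b h h')]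
  exact card_le_card (union_subset (filter_subset _ _) (filter_subset _ _))

theorem sum_outDegOn_eq_sum_inDegOn (S T : Finset V) :
    ∑ v ∈ S, outDegOn A T v = ∑ v ∈ T, inDegOn A S v := by
  simp only [outDegOn, inDegOn, card_filter]
  exact sum_comm

theorem Oriented.three_le_card [DecidableEq V] (hor : Oriented A) {F : Finset V} {f : V}
    (hf : f ∈ F) (hout : 0 < outDegOn A F f) (hin : 0 < inDegOn A F f) : 3 ≤ F.card := by
  obtain ⟨g, hg⟩ := card_pos.1 hout
  obtain ⟨e, he⟩ := card_pos.1 hin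
  obtain ⟨hgF, hfg⟩ := mem_filter.1 hg
  obtain ⟨heF, hef⟩ := mem_filter.1 he
  have hfge : ({f, g, e} : Finset V).card = 3 := card_eq_three.2
    ⟨f, g, e, by rintro rfl; exact hor.irrefl f hfg, by rintro rfl; exact hor.irrefl f hef,
      by rintro rfl; exact hor f g hfg hef, rfl⟩
  calc 3 = ({f, g, e} : Finset V).card := hfge.symm
    _ ≤ F.card := card_le_card (by simp [insert_subset_iff, hf, hgF, heF])

theorem exists_isStar_subset {S : Finset V} {m : ℕ} {f : V}
    (h : m < outDegOn A S f ∨ m < inDegOn A S f) : ∃ U ⊆ S, IsStar A m f U := by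
  rcases h with h | h
  · obtain ⟨U, hUS, hU⟩ := exists_subset_card_eq (Nat.succ_le_of_lt h)
    exact ⟨U, hUS.trans (filter_subset _ _), hU, Or.inl fun u hu => (mem_filter.1 (hUS hu)).2⟩
  · obtain ⟨U, hUS, hU⟩ := exists_subset_card_eq (Nat.succ_le_of_lt h)
    exact ⟨U, hUS.trans (filter_subset _ _), hU, Or.inr fun u hu => (mem_filter.1 (hUS hu)).2⟩

variable [Fintype V]

theorem outDegOn_eq_outDegOn_univ {S : Finset V} {v : V} (h : ∀ b, A v b → b ∈ S) :
    outDegOn A S v = outDegOn A univ v := by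
  unfold outDegOn
  congr 1
  ext b
  simp only [mem_filter, mem_univ, true_and]
  exact ⟨And.right, fun hb => ⟨h b hb, hb⟩⟩

theorem outDegOn_add_outDegOn [DecidableEq V] {S T : Finset V} (hST : Disjoint S T) {v : V}
    (h : ∀ b, A v b → b ∈ S ∪ T) : outDegOn A S v + outDegOn A T v = outDegOn A univ v := by
  rw [← outDegOn_eq_outDegOn_univ h, outDegOn, outDegOn, outDegOn, filter_union,
    card_union_of_disjoint (disjoint_filter_filter hST)]

theorem inDegOn_lt_inDegOn_univ {S : Finset V} {u w : V} (hw : w ∉ S) (hwu : A w u) :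
    inDegOn A S u < inDegOn A univ u :=
  card_lt_card ⟨filter_subset_filter _ (subset_univ S),
    fun h => hw (mem_filter.1 (h (mem_filter.2 ⟨mem_univ w, hwu⟩))).1⟩

variable [DecidableEq V] {m d : ℕ}

/-- If every vertex of `F` had at most `m` out- and in-neighbours in `F`, degree counting would
force `m = 1`, `d = 2` and exactly one edge from each vertex of `F` to `U`; but each vertex of
`U` already has the in-neighbour `w ∉ F`, so receives at most one edge from `F`, while a vertex
of `F` with both an out- and an in-neighbour in `F` shows `|F| ≥ 3 > |U|`. -/
theorem exists_lt_degOn_of_isFragment_of_forall_adj (hor : Oriented A) (hm : 1 ≤ m)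
    (hmd : 2 * m ≤ d) (hd : ∀ v, outDegOn A univ v = d ∧ inDegOn A univ v = d)
    {U F : Finset V} {w : V} (hF : IsFragment A U F) (hU : U.card = m + 1)
    (hwU : ∀ u ∈ U, A w u) (hwF : w ∉ F) :
    ∃ f ∈ F, m < outDegOn A F f ∨ m < inDegOn A F f := by
  by_contra! hsmall
  have hnbr : ∀ f ∈ F, ∀ b, (A f b ∨ A b f) → b ∈ F ∪ U := fun f hf b hfb => by
    by_cases hb : b ∈ U
    · exact mem_union_right F hb
    · exact mem_union_left U (hF.2.2 f hf b hb hfb)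
  have hsplit : ∀ f ∈ F, outDegOn A F f + outDegOn A U f = d ∧
      inDegOn A F f + inDegOn A U f = d := fun f hf =>
    ⟨(outDegOn_add_outDegOn hF.2.1 fun b h => hnbr f hf b (.inl h)).trans (hd f).1,
      (outDegOn_add_outDegOn (A := flip A) hF.2.1 fun b h => hnbr f hf b (.inr h)).trans (hd f).2⟩
  have hone : ∀ f ∈ F, m = 1 ∧ d = 2 ∧ outDegOn A U f = 1 ∧
      0 < outDegOn A F f ∧ 0 < inDegOn A F f := fun f hf => by
    have := hsplit f hf
    have := hsmall f hf
    have := outDegOn_add_inDegOn_le_card hor U f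
    omega
  obtain ⟨f₀, hf₀⟩ := hF.1
  obtain ⟨rfl, rfl, -, hout, hin⟩ := hone f₀ hf₀
  have hFU : F.card ≤ U.card := calc
    F.card = ∑ f ∈ F, outDegOn A U f := by
      rw [sum_congr rfl fun f hf => (hone f hf).2.2.1, sum_const, smul_eq_mul, mul_one]
    _ = ∑ u ∈ U, inDegOn A F u := sum_outDegOn_eq_sum_inDegOn F U
    _ ≤ ∑ _u ∈ U, 1 := sum_le_sum fun u hu => by
      have := inDegOn_lt_inDegOn_univ hwF (hwU u hu)
      have := (hd u).2
      omega
    _ = U.card := by simp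
  have := hor.three_le_card hf₀ hout hin
  omega

theorem exists_lt_degOn_of_isFragment (hor : Oriented A) (hm : 1 ≤ m) (hmd : 2 * m ≤ d)
    (hd : ∀ v, outDegOn A univ v = d ∧ inDegOn A univ v = d) {U F : Finset V} {w : V}
    (hF : IsFragment A U F) (hU : IsStar A m w U) (hwF : w ∉ F) :
    ∃ f ∈ F, m < outDegOn A F f ∨ m < inDegOn A F f := by
  rcases hU.2 with hout | hin
  · exact exists_lt_degOn_of_isFragment_of_forall_adj hor hm hmd hd hF hU.1 hout hwF
  · obtain ⟨f, hf, h⟩ := exists_lt_degOn_of_isFragment_of_forall_adj (A := flip A) hor.flip hm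
      hmd (fun v => (hd v).symm) hF.flip hU.1 hin hwF
    exact ⟨f, hf, h.symm⟩

theorem exists_isStar_subset_isFragment (hor : Oriented A) (hm : 1 ≤ m) (hmd : 2 * m ≤ d)
    (hd : ∀ v, outDegOn A univ v = d ∧ inDegOn A univ v = d) {U F : Finset V} {w : V}
    (hF : IsFragment A U F) (hU : IsStar A m w U) :
    ∃ w₂, ∃ U₂ ⊆ F, w ∉ U₂ ∧ IsStar A m w₂ U₂ := by
  by_cases hwF : w ∈ F
  · have hdeg : m < outDegOn A F w ∨ m < inDegOn A F w := by
      rcases hU.2 with hout | hin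
      · have : inDegOn A F w = d := (outDegOn_eq_outDegOn_univ (A := flip A) fun b hbw =>
          hF.2.2 w hwF b (fun hb => hor w b (hout b hb) hbw) (.inr hbw)).trans (hd w).2
        omega
      · have : outDegOn A F w = d := (outDegOn_eq_outDegOn_univ fun b hwb =>
          hF.2.2 w hwF b (fun hb => hor w b hwb (hin b hb)) (.inl hwb)).trans (hd w).1
        omega
    obtain ⟨U₂, hU₂F, hU₂⟩ := exists_isStar_subset hdeg
    exact ⟨w, U₂, hU₂F, hU₂.center_notMem hor, hU₂⟩
  · obtain ⟨f, -, hf⟩ := exists_lt_degOn_of_isFragment hor hm hmd hd hF hU hwF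
    obtain ⟨U₂, hU₂F, hU₂⟩ := exists_isStar_subset hf
    exact ⟨f, U₂, hU₂F, fun hw => hwF (hU₂F hw), hU₂⟩

theorem not_isFragment_of_forall_not_weaklyConnectedOn (hor : Oriented A) (hm : 1 ≤ m)
    (hmd : 2 * m ≤ d) (hd : ∀ v, outDegOn A univ v = d ∧ inDegOn A univ v = d)
    (hconn : WeaklyConnectedOn A univ)
    (hfail : ∀ w U, IsStar A m w U → ¬WeaklyConnectedOn A (univ \ U)) (F : Finset V) :
    ∀ U w, IsStar A m w U → ¬IsFragment A U F := by
  induction F using Finset.strongInduction with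
  | H F ih =>
    intro U w hU hF
    obtain ⟨w₂, U₂, hU₂F, hwU₂, hU₂⟩ :=
      exists_isStar_subset_isFragment hor hm hmd hd hF hU
    have hU₂ne : U₂.Nonempty := card_pos.1 (by rw [hU₂.1]; omega)
    obtain ⟨F₂, hF₂, hF₂F⟩ :=
      exists_isFragment_ssubset hconn hF (fun _ => hU.adj) hU₂F hU₂ne hwU₂
        (hfail w₂ U₂ hU₂)
    exact ih F₂ hF₂F U₂ w₂ hU₂ hF₂

theorem exists_isStar_weaklyConnectedOn [Nonempty V] (hor : Oriented A) (hm : 1 ≤ m)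
    (hmd : 2 * m ≤ d) (hd : ∀ v, outDegOn A univ v = d ∧ inDegOn A univ v = d)
    (hcrit : ∀ v, chiDegOn A m (univ.erase v) < chiDegOn A m univ) :
    ∃ w U, IsStar A m w U ∧ WeaklyConnectedOn A (univ \ U) := by
  have hconn := weaklyConnectedOn_univ_of_critical hor.irrefl hm hcrit
  by_contra! hfail
  obtain ⟨w⟩ := ‹Nonempty V›
  have hdeg : m < outDegOn A univ w := by have := (hd w).1; omega
  obtain ⟨U, -, hU⟩ := exists_isStar_subset (.inl hdeg)
  obtain ⟨F, hF, -⟩ := exists_isFragment_of_not_weaklyConnectedOn w (hfail w U hU)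
  exact not_isFragment_of_forall_not_weaklyConnectedOn hor hm hmd hd hconn hfail F U w hU hF

end Degree

theorem Finset.exists_injective_image_eq {α : Type*} [DecidableEq α] {s : Finset α} {n : ℕ}
    (h : s.card = n) : ∃ u : Fin n → α, Function.Injective u ∧ image u univ = s := by
  let e := s.equivFinOfCardEq h
  refine ⟨fun i => e.symm i, Subtype.val_injective.comp e.symm.injective, ?_⟩
  ext x
  simp only [mem_image, mem_univ, true_and]
  exact ⟨fun ⟨i, hi⟩ => hi ▸ (e.symm i).2, fun hx => ⟨e ⟨x, hx⟩, by simp⟩⟩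

theorem stmt6 [Fintype V] [DecidableEq V] (A : V → V → Prop) [DecidableRel A]
    (m k : ℕ) (hm : 1 ≤ m) (hk : 3 ≤ k) (hor : Oriented A)
    (hchi : chiDegOn A m Finset.univ = k)
    (hcrit : ∀ v : V, chiDegOn A m (Finset.univ.erase v) < k)
    (hdeg : ∀ v : V, outDegOn A Finset.univ v = (k - 1) * m ∧
      inDegOn A Finset.univ v = (k - 1) * m) :
    ∃ (u : Fin (m + 1) → V) (w : V), Function.Injective u ∧ (∀ i, u i ≠ w) ∧
      ((∀ i, A w (u i)) ∨ (∀ i, A (u i) w)) ∧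
      WeaklyConnectedOn A (Finset.univ \ Finset.image u Finset.univ) := by
  have hmd : 2 * m ≤ (k - 1) * m := Nat.mul_le_mul_right m (by omega)
  have : Nonempty V := by
    by_contra hV
    rw [not_nonempty_iff] at hV
    have := chiDegOn_eq_zero (A := A) (m := m) univ
    omega
  obtain ⟨w, U, hU, hconn⟩ :=
    exists_isStar_weaklyConnectedOn hor hm hmd hdeg fun v => hchi ▸ hcrit v
  obtain ⟨u, hu, rfl⟩ := exists_injective_image_eq hU.1
  have hmem : ∀ i, u i ∈ image u univ := fun i => mem_image_of_mem u (mem_univ i)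
  exact ⟨u, w, hu, fun i h => hU.center_notMem hor (h ▸ hmem i),
    hU.2.imp (fun h i => h _ (hmem i)) (fun h i => h _ (hmem i)), hconn⟩
end

section
/- Let G be an undirected graph and suppose Δ(G) = (s-1) + Σ_{i=1}^s Δ_i for some s ≥ 1 and positive integers Δ_1, …, Δ_s. Then V(G) can be partitioned into s sets V_1, …, V_s such that the subgraph induced on V_i has maximum degree at most Δ_i for each i. -/
open Finset

variable {V : Type*}

/-!
Lovász's argument: choose a colouring `c : W → ι` minimising the number of monochromatic edges
minus `∑ v, Δ (c v)`. If some vertex `v` had more than `Δ (c v)` neighbours of its own colour,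
then, as `deg v ≤ (s - 1) + ∑ k, Δ k`, some colour `k` has at most `Δ k` neighbours of `v`, and
recolouring `v` with `k` would lower that quantity.
-/

theorem Fintype.sum_sub_sum_eq_of_forall_ne {α M : Type*} [Fintype α] [AddCommGroup M]
    {f g : α → M} (a : α) (h : ∀ x, x ≠ a → f x = g x) :
    ∑ x, f x - ∑ x, g x = f a - g a := by
  rw [← Finset.sum_sub_distrib]
  exact Fintype.sum_eq_single a fun x hx => sub_eq_zero.mpr (h x hx)

theorem Fintype.sum_sum_eq_two_nsmul_sum_of_symm {α M : Type*} [Fintype α] [DecidableEq α]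
    [AddCommMonoid M] {h : α → α → M} (a : α) (hsymm : ∀ x y, h x y = h y x) (hdiag : h a a = 0)
    (hsupp : ∀ x y, x ≠ a → y ≠ a → h x y = 0) :
    ∑ x, ∑ y, h x y = 2 • ∑ y, h a y := by
  have row : ∀ x ∈ ({a}ᶜ : Finset α), ∑ y, h x y = h a x := fun x hx => by
    rw [Fintype.sum_eq_single a fun y hy => hsupp x y (by simpa using hx) hy, hsymm]
  rw [Fintype.sum_eq_add_sum_compl a, Finset.sum_congr rfl row,
    ← zero_add (∑ x ∈ ({a}ᶜ : Finset α), h a x), ← hdiag, ← Fintype.sum_eq_add_sum_compl, two_nsmul]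

namespace SimpleGraph

variable {W ι : Type*} [Fintype W] [DecidableEq ι] (G : SimpleGraph W) [DecidableRel G.Adj]

def colorDegree (c : W → ι) (v : W) (k : ι) : ℕ := #{w ∈ G.neighborFinset v | c w = k}

theorem sum_colorDegree [Fintype ι] (c : W → ι) (v : W) :
    ∑ k, G.colorDegree c v k = G.degree v := by
  rw [← card_neighborFinset_eq_degree,
    card_eq_sum_card_fiberwise fun w _ => Finset.mem_coe.mpr (Finset.mem_univ (c w))]
  rfl

theorem colorDegree_eq_sum_ite (c : W → ι) (v : W) (k : ι) :
    (G.colorDegree c v k : ℤ) = ∑ w, if G.Adj v w ∧ k = c w then 1 else 0 := by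
  rw [Finset.sum_boole, colorDegree, neighborFinset_eq_filter, Finset.filter_filter]
  simp only [eq_comm]

theorem exists_colorDegree_le [Fintype ι] {Δ : ι → ℕ}
    (hdeg : G.maxDegree < Fintype.card ι + ∑ k, Δ k) (c : W → ι) (v : W) :
    ∃ k, G.colorDegree c v k ≤ Δ k := by
  have hlt : ∑ k, G.colorDegree c v k < ∑ k, (Δ k + 1) := by
    rw [sum_colorDegree, Finset.sum_add_distrib, Finset.sum_const, Finset.card_univ, smul_eq_mul,
      mul_one]
    linarith [G.degree_le_maxDegree v]
  obtain ⟨k, -, hk⟩ := Finset.exists_lt_of_sum_lt hlt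
  exact ⟨k, Nat.le_of_lt_succ hk⟩

def lovaszPotential (Δ : ι → ℕ) (c : W → ι) : ℤ :=
  ∑ x, ∑ y, (if G.Adj x y ∧ c x = c y then 1 else 0) - 2 * ∑ x, (Δ (c x) : ℤ)

variable [DecidableEq W]

theorem lovaszPotential_update_sub (Δ : ι → ℕ) (c : W → ι) (v : W) (k : ι) :
    G.lovaszPotential Δ (Function.update c v k) - G.lovaszPotential Δ c =
      2 * (((G.colorDegree c v k : ℤ) - Δ k) - ((G.colorDegree c v (c v) : ℤ) - Δ (c v))) := by
  set c' := Function.update c v k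
  have hc'v : c' v = k := Function.update_self v k c
  have hc' : ∀ x, x ≠ v → c' x = c x := fun x hx => Function.update_of_ne hx k c
  have weight : ∑ x, (Δ (c' x) : ℤ) - ∑ x, (Δ (c x) : ℤ) = Δ k - Δ (c v) := by
    rw [Fintype.sum_sub_sum_eq_of_forall_ne v fun x hx => by rw [hc' x hx], hc'v]
  have mono : ∑ x, ∑ y, ((if G.Adj x y ∧ c' x = c' y then 1 else 0) -
      (if G.Adj x y ∧ c x = c y then 1 else 0) : ℤ) =
      2 * ((G.colorDegree c v k : ℤ) - G.colorDegree c v (c v)) := by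
    rw [Fintype.sum_sum_eq_two_nsmul_sum_of_symm v, two_nsmul, ← two_mul,
      colorDegree_eq_sum_ite, colorDegree_eq_sum_ite, ← Finset.sum_sub_distrib]
    · congr 1
      refine Finset.sum_congr rfl fun y _ => ?_
      by_cases hy : G.Adj v y
      · simp [hy, hc' y (G.ne_of_adj hy).symm, c']
      · simp [hy]
    · intro x y
      simp only [G.adj_comm x y, eq_comm (a := c' x), eq_comm (a := c x)]
    · simp
    · intro x y hx hy
      simp [hc' x hx, hc' y hy]
  simp only [lovaszPotential, Finset.sum_sub_distrib] at mono ⊢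
  linear_combination mono - 2 * weight

theorem exists_forall_colorDegree_le [Fintype ι] {Δ : ι → ℕ}
    (hdeg : G.maxDegree < Fintype.card ι + ∑ k, Δ k) :
    ∃ c : W → ι, ∀ v, G.colorDegree c v (c v) ≤ Δ (c v) := by
  have : Nonempty ι := by
    by_contra hι
    simp [not_nonempty_iff.mp hι] at hdeg
  obtain ⟨c, hmin⟩ := Finite.exists_min (G.lovaszPotential Δ)
  refine ⟨c, fun v => ?_⟩
  obtain ⟨k, hk⟩ := G.exists_colorDegree_le hdeg c v
  have hdiff := G.lovaszPotential_update_sub Δ c v k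
  have hle := hmin (Function.update c v k)
  omega

end SimpleGraph

theorem stmt13_general {W : Type*} [Fintype W] [DecidableEq W] (G : SimpleGraph W)
    [DecidableRel G.Adj] (s : ℕ) (hs : 1 ≤ s) (Δ : Fin s → ℕ)
    (hsum : G.maxDegree = (s - 1) + ∑ i, Δ i) :
    ∃ P : Fin s → Finset W, (∀ i j, i ≠ j → Disjoint (P i) (P j)) ∧
      Finset.univ.biUnion P = Finset.univ ∧
      ∀ i, ∀ v ∈ P i, ((P i).filter (fun w => G.Adj v w)).card ≤ Δ i := by
  obtain ⟨c, hc⟩ := G.exists_forall_colorDegree_le (Δ := Δ) (by rw [Fintype.card_fin]; omega)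
  refine ⟨fun i => {v | c v = i}, fun i j hij => ?_, ?_, fun i v hv => ?_⟩
  · exact Finset.disjoint_filter.mpr fun v _ hi hj => hij (hi ▸ hj)
  · ext v
    simp
  · obtain rfl : c v = i := (Finset.mem_filter.mp hv).2
    convert hc v using 1
    rw [SimpleGraph.colorDegree, SimpleGraph.neighborFinset_eq_filter, Finset.filter_filter,
      Finset.filter_filter]
    simp only [and_comm]

theorem stmt13 {W : Type*} [Fintype W] [DecidableEq W] (G : SimpleGraph W)
    [DecidableRel G.Adj] (s : ℕ) (hs : 1 ≤ s) (Δ : Fin s → ℕ) (hΔ : ∀ i, 1 ≤ Δ i)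
    (hsum : G.maxDegree = (s - 1) + ∑ i, Δ i) :
    ∃ P : Fin s → Finset W, (∀ i j, i ≠ j → Disjoint (P i) (P j)) ∧
      Finset.univ.biUnion P = Finset.univ ∧
      ∀ i, ∀ v ∈ P i, ((P i).filter (fun w => G.Adj v w)).card ≤ Δ i :=
  stmt13_general G s hs Δ hsum
end
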